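/- Let H, H' be complex Hilbert spaces and let Z : H → H' be a continuous linear map admitting a parametrix Q. Then the kernel of Z and the cokernel H'/range(Z) are finite-dimensional, and for the finite-rank operator L_Q on H × H' defined by L_Q(u,v) = (u − Q(Z u), Z(Q v) − v) one has Tr(L_Q) = dim ker(Z) − dim (H'/range(Z)), i.e. the trace of the logarithm equals the Fredholm index of Z. -/

import Mathlib

/-!
Over a field every linear map `Z` has an inner inverse `Q₀`, i.e. `Z Q₀ Z = Z`. Then `1 - Q₀ Z` and
`1 - Z Q₀` are idempotents with ranges `ker Z` and a complement of `range Z`, so their traces are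
`dim ker Z` and `dim coker Z`. Any parametrix `Q` differs from `Q₀` by the finite-rank operator
`D = Q - Q₀ = Q₀ (Z Q - 1) + (1 - Q₀ Z) Q`, and passing from `Q₀` to `Q` subtracts `Tr (D Z)` from
`Tr (1 - Q Z)` and `Tr (Z D)` from `Tr (1 - Z Q)`; these agree. Hence
`Tr L_Q = Tr (1 - Q Z) - Tr (1 - Z Q)` is the index.
-/

/-- A continuous linear map is of finite rank if its range is finite dimensional. -/
def FiniteRank {V W : Type*} [NormedAddCommGroup V] [NormedSpace ℂ V]
    [NormedAddCommGroup W] [NormedSpace ℂ W] (T : V →L[ℂ] W) : Prop :=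
  FiniteDimensional ℂ (LinearMap.range (T : V →ₗ[ℂ] W))

/-- `Q` is a parametrix for `Z`: `Q∘Z - id` and `Z∘Q - id` are finite rank. -/
def IsParametrix {H H' : Type*} [NormedAddCommGroup H] [NormedSpace ℂ H]
    [NormedAddCommGroup H'] [NormedSpace ℂ H']
    (Z : H →L[ℂ] H') (Q : H' →L[ℂ] H) : Prop :=
  FiniteRank (Q.comp Z - ContinuousLinearMap.id ℂ H) ∧
    FiniteRank (Z.comp Q - ContinuousLinearMap.id ℂ H')

/-- The logarithm `L_Q (u, v) = (u − Q(Z u), Z(Q v) − v)` on `H × H'`. -/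
noncomputable def Lop {H H' : Type*} [NormedAddCommGroup H] [NormedSpace ℂ H]
    [NormedAddCommGroup H'] [NormedSpace ℂ H']
    (Z : H →L[ℂ] H') (Q : H' →L[ℂ] H) : (H × H') →L[ℂ] (H × H') :=
  ((ContinuousLinearMap.id ℂ H - Q.comp Z).comp (ContinuousLinearMap.fst ℂ H H')).prod
    ((Z.comp Q - ContinuousLinearMap.id ℂ H').comp (ContinuousLinearMap.snd ℂ H H'))

/-- The trace of a (finite-rank) continuous operator `T`, defined as the trace of the
endomorphism induced by `T` on the subspace `range T`. -/
noncomputable def fTrace {V : Type*} [NormedAddCommGroup V] [NormedSpace ℂ V]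
    (T : V →L[ℂ] V) : ℂ :=
  LinearMap.trace ℂ (LinearMap.range (T : V →ₗ[ℂ] V))
    ((T : V →ₗ[ℂ] V).restrict
      (p := LinearMap.range (T : V →ₗ[ℂ] V)) (q := LinearMap.range (T : V →ₗ[ℂ] V))
      (fun x _hx => ⟨x, rfl⟩))

open Module Submodule

namespace LinearMap

variable {K V W U : Type*} [Field K] [AddCommGroup V] [Module K V] [AddCommGroup W]
  [Module K W] [AddCommGroup U] [Module K U]

instance finiteDimensional_range_comp_left (f : W →ₗ[K] U) (g : V →ₗ[K] W)
    [FiniteDimensional K (range f)] : FiniteDimensional K (range (f ∘ₗ g)) :=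
  finiteDimensional_of_le (range_comp_le_range g f)

instance finiteDimensional_range_comp_right (f : W →ₗ[K] U) (g : V →ₗ[K] W)
    [FiniteDimensional K (range g)] : FiniteDimensional K (range (f ∘ₗ g)) := by
  rw [range_comp]
  infer_instance

instance finiteDimensional_range_add (f g : V →ₗ[K] W) [FiniteDimensional K (range f)]
    [FiniteDimensional K (range g)] : FiniteDimensional K (range (f + g)) :=
  finiteDimensional_of_le (range_add_le f g)

instance finiteDimensional_range_neg (f : V →ₗ[K] W) [FiniteDimensional K (range f)] :
    FiniteDimensional K (range (-f)) := by
  rwa [range_neg]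

noncomputable def rangeTrace (f : V →ₗ[K] V) : K :=
  trace K (range f) (f.restrict fun x _ => mem_range_self f x)

theorem rangeTrace_eq_trace_restrict (f : V →ₗ[K] V) {p : Submodule K V}
    [FiniteDimensional K p] (hp : range f ≤ p) :
    rangeTrace f = trace K p (f.restrict fun x _ => hp (mem_range_self f x)) := by
  set g : p →ₗ[K] p := f.restrict fun x _ => hp (mem_range_self f x)
  have hg : ∀ x, g x ∈ (range f).comap p.subtype := fun x => mem_range_self f x
  rw [← trace_restrict_eq_of_forall_mem _ g hg, rangeTrace,
    ← trace_conj' _ (comapSubtypeEquivOfLe hp).symm]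
  congr 1

theorem rangeTrace_add (f g : V →ₗ[K] V) [FiniteDimensional K (range f)]
    [FiniteDimensional K (range g)] :
    rangeTrace (f + g) = rangeTrace f + rangeTrace g := by
  have hf : range f ≤ range f ⊔ range g := le_sup_left
  have hg : range g ≤ range f ⊔ range g := le_sup_right
  rw [rangeTrace_eq_trace_restrict f hf, rangeTrace_eq_trace_restrict g hg,
    rangeTrace_eq_trace_restrict (f + g) ((range_add_le f g).trans (sup_le hf hg)), ← map_add]
  congr 1

theorem rangeTrace_neg (f : V →ₗ[K] V) [FiniteDimensional K (range f)] :
    rangeTrace (-f) = -rangeTrace f := by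
  rw [rangeTrace_eq_trace_restrict (-f) (range_neg f).le,
    rangeTrace_eq_trace_restrict f le_rfl, ← map_neg]
  congr 1

theorem rangeTrace_comp_comm (S : V →ₗ[K] W) (R : W →ₗ[K] V)
    [FiniteDimensional K (range R)] :
    rangeTrace (R ∘ₗ S) = rangeTrace (S ∘ₗ R) := by
  have hRS : range (R ∘ₗ S) ≤ range R := range_comp_le_range S R
  have hSR : range (S ∘ₗ R) ≤ (range R).map S := (range_comp R S).le
  let u : range R →ₗ[K] (range R).map S :=
    (S ∘ₗ (range R).subtype).codRestrict _ fun x => mem_map_of_mem x.2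
  let v : (range R).map S →ₗ[K] range R :=
    (R ∘ₗ ((range R).map S).subtype).codRestrict _ fun x => mem_range_self R x
  rw [rangeTrace_eq_trace_restrict _ hRS, rangeTrace_eq_trace_restrict _ hSR,
    show (R ∘ₗ S).restrict _ = v ∘ₗ u by ext; rfl,
    show (S ∘ₗ R).restrict _ = u ∘ₗ v by ext; rfl, trace_comp_comm']

theorem rangeTrace_of_isIdempotentElem {f : V →ₗ[K] V} [FiniteDimensional K (range f)]
    (hf : IsIdempotentElem f) :
    rangeTrace f = finrank K (range f) := by
  rw [rangeTrace, ← trace_id]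
  congr 1
  ext ⟨_, x, rfl⟩
  exact congr($hf x)

theorem rangeTrace_prodMap (A : V →ₗ[K] V) (B : W →ₗ[K] W) [FiniteDimensional K (range A)]
    [FiniteDimensional K (range B)] :
    rangeTrace (A.prodMap B) = rangeTrace A + rangeTrace B := by
  have h : A.prodMap B = (inl K V W ∘ₗ A) ∘ₗ fst K V W + (inr K V W ∘ₗ B) ∘ₗ snd K V W := by
    ext <;> simp
  rw [h, rangeTrace_add, rangeTrace_comp_comm, rangeTrace_comp_comm (snd K V W),
    ← comp_assoc, ← comp_assoc, fst_comp_inl, snd_comp_inr, id_comp, id_comp]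

theorem exists_comp_comp_eq_self (Z : V →ₗ[K] W) : ∃ Q₀ : W →ₗ[K] V, Z ∘ₗ Q₀ ∘ₗ Z = Z := by
  obtain ⟨S, hS⟩ := Z.rangeRestrict.exists_rightInverse_of_surjective Z.range_rangeRestrict
  obtain ⟨Q₀, hQ₀⟩ := S.exists_extend
  refine ⟨Q₀, ext fun x => ?_⟩
  calc Z (Q₀ (Z x)) = Z (S (Z.rangeRestrict x)) := by rw [← hQ₀]; rfl
    _ = Z x := congrArg Subtype.val (congr($hS (Z.rangeRestrict x)))

section InnerInverse

variable {Z : V →ₗ[K] W} {Q₀ : W →ₗ[K] V}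

theorem isIdempotentElem_id_sub_comp (h : Z ∘ₗ Q₀ ∘ₗ Z = Z) :
    IsIdempotentElem (id - Q₀ ∘ₗ Z) :=
  IsIdempotentElem.one_sub (show (Q₀ ∘ₗ Z) * (Q₀ ∘ₗ Z) = Q₀ ∘ₗ Z by
    rw [Module.End.mul_eq_comp, comp_assoc, h])

theorem isIdempotentElem_id_sub_comp' (h : Z ∘ₗ Q₀ ∘ₗ Z = Z) :
    IsIdempotentElem (id - Z ∘ₗ Q₀) :=
  IsIdempotentElem.one_sub (show (Z ∘ₗ Q₀) * (Z ∘ₗ Q₀) = Z ∘ₗ Q₀ by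
    rw [Module.End.mul_eq_comp, ← comp_assoc, comp_assoc Z, h])

theorem range_id_sub_comp (h : Z ∘ₗ Q₀ ∘ₗ Z = Z) : range (id - Q₀ ∘ₗ Z) = ker Z := by
  refine le_antisymm ?_ fun x hx => ⟨x, by simp [mem_ker.mp hx]⟩
  rintro _ ⟨x, rfl⟩
  simpa [sub_eq_zero] using congr($h x).symm

theorem ker_id_sub_comp' (h : Z ∘ₗ Q₀ ∘ₗ Z = Z) : ker (id - Z ∘ₗ Q₀) = range Z := by
  refine le_antisymm (fun y hy => ⟨Q₀ y, ?_⟩) ?_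
  · rintro _ ⟨x, rfl⟩
    rw [mem_ker, sub_apply, id_apply, sub_eq_zero]
    exact congr($h x).symm
  · rw [mem_ker, sub_apply, id_apply, sub_eq_zero] at hy
    exact hy.symm

theorem finiteDimensional_range_id_sub_comp [FiniteDimensional K (ker Z)]
    (h : Z ∘ₗ Q₀ ∘ₗ Z = Z) : FiniteDimensional K (range (id - Q₀ ∘ₗ Z)) := by
  rwa [range_id_sub_comp h]

noncomputable def quotRangeEquivRangeIdSubComp (h : Z ∘ₗ Q₀ ∘ₗ Z = Z) :
    (W ⧸ range Z) ≃ₗ[K] range (id - Z ∘ₗ Q₀) :=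
  (quotEquivOfEq _ _ (ker_id_sub_comp' h).symm).trans (quotKerEquivRange _)

end InnerInverse

noncomputable def parametrixTrace (Z : V →ₗ[K] W) (Q : W →ₗ[K] V) : K :=
  rangeTrace (id - Q ∘ₗ Z) + rangeTrace (Z ∘ₗ Q - id)

theorem parametrixTrace_of_comp_comp_eq_self {Z : V →ₗ[K] W} {Q₀ : W →ₗ[K] V}
    [FiniteDimensional K (ker Z)] [FiniteDimensional K (W ⧸ range Z)] (h : Z ∘ₗ Q₀ ∘ₗ Z = Z) :
    parametrixTrace Z Q₀ = finrank K (ker Z) - finrank K (W ⧸ range Z) := by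
  have := finiteDimensional_range_id_sub_comp h
  have := (quotRangeEquivRangeIdSubComp h).finiteDimensional
  rw [parametrixTrace, ← neg_sub id (Z ∘ₗ Q₀), rangeTrace_neg,
    rangeTrace_of_isIdempotentElem (isIdempotentElem_id_sub_comp h),
    rangeTrace_of_isIdempotentElem (isIdempotentElem_id_sub_comp' h), range_id_sub_comp h,
    ← (quotRangeEquivRangeIdSubComp h).finrank_eq, sub_eq_add_neg]

theorem finiteDimensional_ker_of_id_sub_comp (Z : V →ₗ[K] W) (Q : W →ₗ[K] V)
    [FiniteDimensional K (range (id - Q ∘ₗ Z))] : FiniteDimensional K (ker Z) :=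
  finiteDimensional_of_le (show ker Z ≤ range (id - Q ∘ₗ Z) from
    fun x hx => ⟨x, by simp [mem_ker.mp hx]⟩)

theorem finiteDimensional_quotient_range_of_comp_sub_id (Z : V →ₗ[K] W) (Q : W →ₗ[K] V)
    [FiniteDimensional K (range (Z ∘ₗ Q - id))] : FiniteDimensional K (W ⧸ range Z) := by
  refine Module.Finite.of_surjective ((range Z).mkQ ∘ₗ (range (Z ∘ₗ Q - id)).subtype) ?_
  intro c
  obtain ⟨y, rfl⟩ := mkQ_surjective _ c
  refine ⟨⟨(Z ∘ₗ Q - id : W →ₗ[K] W) (-y), mem_range_self _ _⟩, ?_⟩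
  rw [comp_apply, subtype_apply, mkQ_apply, mkQ_apply, Submodule.Quotient.eq]
  exact ⟨-Q y, by simp⟩

theorem parametrixTrace_eq_of_parametrix (Z : V →ₗ[K] W) (Q Q' : W →ₗ[K] V)
    [FiniteDimensional K (range (id - Q ∘ₗ Z))] [FiniteDimensional K (range (Z ∘ₗ Q - id))]
    [FiniteDimensional K (range (id - Q' ∘ₗ Z))] :
    parametrixTrace Z Q' = parametrixTrace Z Q := by
  set D := Q - Q'
  have hD : D = Q' ∘ₗ (Z ∘ₗ Q - id) + (id - Q' ∘ₗ Z) ∘ₗ Q := by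
    ext y
    simp only [D, sub_apply, add_apply, comp_apply, id_apply, map_sub]
    abel
  have : FiniteDimensional K (range D) := by rw [hD]; infer_instance
  have hA : id - Q' ∘ₗ Z = (id - Q ∘ₗ Z) + D ∘ₗ Z := by
    rw [sub_comp]
    abel
  have hB : Z ∘ₗ Q' - id = (Z ∘ₗ Q - id) + -(Z ∘ₗ D) := by
    rw [comp_sub]
    abel
  rw [parametrixTrace, parametrixTrace, hA, hB, rangeTrace_add, rangeTrace_add, rangeTrace_neg,
    rangeTrace_comp_comm Z D]
  ring

theorem parametrixTrace_eq_index (Z : V →ₗ[K] W) (Q : W →ₗ[K] V)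
    [FiniteDimensional K (range (id - Q ∘ₗ Z))] [FiniteDimensional K (range (Z ∘ₗ Q - id))] :
    parametrixTrace Z Q = finrank K (ker Z) - finrank K (W ⧸ range Z) := by
  have := finiteDimensional_ker_of_id_sub_comp Z Q
  have := finiteDimensional_quotient_range_of_comp_sub_id Z Q
  obtain ⟨Q₀, h⟩ := exists_comp_comp_eq_self Z
  have := finiteDimensional_range_id_sub_comp h
  rw [← parametrixTrace_eq_of_parametrix Z Q Q₀, parametrixTrace_of_comp_comp_eq_self h]

end LinearMap

section Parametrix

open LinearMap

variable {H H' : Type*} [NormedAddCommGroup H] [NormedSpace ℂ H] [NormedAddCommGroup H']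
  [NormedSpace ℂ H'] {Z : H →L[ℂ] H'} {Q : H' →L[ℂ] H}

theorem IsParametrix.finiteDimensional_range_id_sub_comp (hQ : IsParametrix Z Q) :
    FiniteDimensional ℂ (range (LinearMap.id - (Q : H' →ₗ[ℂ] H) ∘ₗ (Z : H →ₗ[ℂ] H'))) := by
  rw [← range_neg, neg_sub]
  exact hQ.1

theorem IsParametrix.finiteDimensional_range_comp_sub_id (hQ : IsParametrix Z Q) :
    FiniteDimensional ℂ (range ((Z : H →ₗ[ℂ] H') ∘ₗ (Q : H' →ₗ[ℂ] H) - LinearMap.id)) :=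
  hQ.2

theorem fTrace_Lop :
    fTrace (Lop Z Q) =
      rangeTrace ((LinearMap.id - (Q : H' →ₗ[ℂ] H) ∘ₗ (Z : H →ₗ[ℂ] H')).prodMap
        ((Z : H →ₗ[ℂ] H') ∘ₗ (Q : H' →ₗ[ℂ] H) - LinearMap.id)) :=
  rfl

end Parametrix

theorem stmt2_general {H H' : Type*}
    [NormedAddCommGroup H] [InnerProductSpace ℂ H]
    [NormedAddCommGroup H'] [InnerProductSpace ℂ H']
    (Z : H →L[ℂ] H') (Q : H' →L[ℂ] H) (hQ : IsParametrix Z Q) :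
    FiniteDimensional ℂ (LinearMap.ker (Z : H →ₗ[ℂ] H')) ∧
    FiniteDimensional ℂ (H' ⧸ LinearMap.range (Z : H →ₗ[ℂ] H')) ∧
    fTrace (Lop Z Q) =
      (Module.finrank ℂ (LinearMap.ker (Z : H →ₗ[ℂ] H')) : ℂ) -
        (Module.finrank ℂ (H' ⧸ LinearMap.range (Z : H →ₗ[ℂ] H')) : ℂ) := by
  have := hQ.finiteDimensional_range_id_sub_comp
  have := hQ.finiteDimensional_range_comp_sub_id
  refine ⟨LinearMap.finiteDimensional_ker_of_id_sub_comp _ (Q : H' →ₗ[ℂ] H),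
    LinearMap.finiteDimensional_quotient_range_of_comp_sub_id _ (Q : H' →ₗ[ℂ] H), ?_⟩
  rw [fTrace_Lop, LinearMap.rangeTrace_prodMap, ← LinearMap.parametrixTrace,
    LinearMap.parametrixTrace_eq_index]

theorem stmt2 {H H' : Type*}
    [NormedAddCommGroup H] [InnerProductSpace ℂ H] [CompleteSpace H]
    [NormedAddCommGroup H'] [InnerProductSpace ℂ H'] [CompleteSpace H']
    (Z : H →L[ℂ] H') (Q : H' →L[ℂ] H) (hQ : IsParametrix Z Q) :
    FiniteDimensional ℂ (LinearMap.ker (Z : H →ₗ[ℂ] H')) ∧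
    FiniteDimensional ℂ (H' ⧸ LinearMap.range (Z : H →ₗ[ℂ] H')) ∧
    fTrace (Lop Z Q) =
      (Module.finrank ℂ (LinearMap.ker (Z : H →ₗ[ℂ] H')) : ℂ) -
        (Module.finrank ℂ (H' ⧸ LinearMap.range (Z : H →ₗ[ℂ] H')) : ℂ) :=
  stmt2_general Z Q hQ
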